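/- In Ãₙ, the intersection of the parabolic subgroup ⟨a₁,…,aₙ⟩ with N = ⟨pⱼ⁻¹pᵢ⟩ is trivial. -/

import Mathlib

open CoxeterMatrix

/-- The affine Coxeter matrix of type Ãₙ on the cyclic index set `ZMod (n+1)`:
`aᵢ² = 1`, `(aᵢa_{i+1})³ = 1`, and non-adjacent generators (mod n+1) commute. -/
def affineA (n : ℕ) : CoxeterMatrix (ZMod (n + 1)) where
  M := fun i j => if i = j then 1 else if i = j + 1 ∨ j = i + 1 then 3 else 2
  isSymm := by
    ext i j
    by_cases h : i = j
    · subst h; rfl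
    · show (if j = i then (1 : ℕ) else if j = i + 1 ∨ i = j + 1 then 3 else 2) =
        (if i = j then (1 : ℕ) else if i = j + 1 ∨ j = i + 1 then 3 else 2)
      rw [if_neg h, if_neg (Ne.symm h)]
      exact if_congr or_comm rfl rfl
  diagonal := fun i => by simp
  off_diagonal := fun i j h => by
    simp only [if_neg h]
    split <;> simp

/-- The Coxeter generators `aᵢ` of `Ãₙ`. -/
def aa (n : ℕ) (i : ZMod (n + 1)) : (affineA n).Group := (affineA n).simple i

/-- The cyclic products `pⱼ = a_{j+1} a_{j+2} ⋯ a_{j-1}` (indices mod `n+1`). -/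
def pp (n : ℕ) (j : ZMod (n + 1)) : (affineA n).Group :=
  ((List.range n).map fun k => aa n (j + 1 + (k : ℕ))).prod

/-- `gⱼ = pⱼ⁻¹ p_{j+1}`. -/
def gg (n : ℕ) (j : ZMod (n + 1)) : (affineA n).Group := (pp n j)⁻¹ * pp n (j + 1)

/-- The subgroup `N = ⟨pⱼ⁻¹pᵢ : i, j⟩` of `Ãₙ`. -/
def NN (n : ℕ) : Subgroup (affineA n).Group :=
  Subgroup.closure {x | ∃ i j : ZMod (n + 1), x = (pp n j)⁻¹ * pp n i}

/-- The standard parabolic subgroup `⟨a₁,…,aₙ⟩` of `Ãₙ` (all generators except `a_{n+1} = a₀`). -/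
def parab (n : ℕ) : Subgroup (affineA n).Group :=
  Subgroup.closure {x | ∃ i : ZMod (n + 1), i ≠ 0 ∧ x = aa n i}

/-! The homomorphism `Ãₙ → Perm (ZMod (n+1))`, `aᵢ ↦ (i-1 i)`, sends every `pⱼ` to the
rotation `x ↦ x + 1`, so it kills `N`; it remains to see that it is injective on
`Hₙ = ⟨a₁,…,aₙ⟩`. Only the type-`Aₙ` relations among `a₁,…,aₙ` enter: with `Hₘ = ⟨a₁,…,aₘ⟩`,
the exchange rules for `aᵢ` against `a_{m+1} aₘ ⋯ a_{j+1}` show that `H_{m+1}` is the union of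
the cosets `Hₘ · a_{m+1} aₘ ⋯ a_{j+1}` (`0 ≤ j ≤ m+1`). The image of `Hₘ` fixes `m+1` and the
image of the coset representative sends `j` to `m+1`, so an element of `H_{m+1}` with a given
image lies in a determined coset, and injectivity follows by induction on `m`. -/

open Equiv Set

section TypeA

variable {G : Type*} [Group G]

structure IsTypeAFamily (t : ℕ → G) (n : ℕ) : Prop where
  mul_self : ∀ i < n, t i * t i = 1
  braid : ∀ i, i + 1 < n → t i * t (i + 1) * t i = t (i + 1) * t i * t (i + 1)
  commute : ∀ i j, i + 2 ≤ j → j < n → Commute (t i) (t j)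

def descWord (t : ℕ → G) (j : ℕ) : ℕ → G
  | 0 => 1
  | k + 1 => t (j + k) * descWord t j k

variable {t : ℕ → G} {n : ℕ}

lemma descWord_succ_eq_mul (j k : ℕ) : descWord t j (k + 1) = descWord t (j + 1) k * t j := by
  induction k with
  | zero => simp [descWord]
  | succ k ih => rw [descWord, ih, descWord, ← mul_assoc, Nat.add_right_comm, ← Nat.add_assoc]

lemma commute_descWord {g : G} {j k : ℕ} (h : ∀ l, j ≤ l → l < j + k → Commute g (t l)) :
    Commute g (descWord t j k) := by
  induction k with
  | zero => exact Commute.one_right g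
  | succ k ih =>
    exact (h (j + k) (by omega) (by omega)).mul_right (ih fun l hjl hlk => h l hjl (by omega))

lemma IsTypeAFamily.descWord_mul (ht : IsTypeAFamily t n) {i j k : ℕ} (hji : j ≤ i)
    (hik : i + 1 < j + k) (hkn : j + k ≤ n) :
    descWord t j k * t (i + 1) = t i * descWord t j k := by
  induction k with
  | zero => omega
  | succ k ih =>
    rw [descWord]
    rcases Nat.lt_or_ge (i + 1) (j + k) with hlt | hge
    · rw [mul_assoc, ih hlt (by omega), ← mul_assoc, ← mul_assoc,
        (ht.commute i (j + k) (by omega) (by omega)).eq]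
    · obtain ⟨k, rfl⟩ : ∃ k', k = k' + 1 := ⟨k - 1, by omega⟩
      obtain rfl : i = j + k := by omega
      have hc : Commute (t (j + k + 1)) (descWord t j k) :=
        commute_descWord fun l hjl hlk => (ht.commute l _ (by omega) (by omega)).symm
      rw [descWord, ← mul_assoc, mul_assoc _ (descWord t j k), ← hc.eq, ← mul_assoc,
        ← Nat.add_assoc, ← ht.braid (j + k) (by omega)]
      simp only [mul_assoc]

def descCosets (t : ℕ → G) (m : ℕ) : Set G :=
  {x | ∃ h ∈ Subgroup.closure (t '' Iio m), ∃ j k, j + k = m + 1 ∧ x = h * descWord t j k}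

lemma IsTypeAFamily.mul_mem_descCosets (ht : IsTypeAFamily t n) {m : ℕ} (hm : m < n) {x : G}
    (hx : x ∈ descCosets t m) {i : ℕ} (hi : i ≤ m) : x * t i ∈ descCosets t m := by
  obtain ⟨h, hh, j, k, hjk, rfl⟩ := hx
  have gen : ∀ l < m, t l ∈ Subgroup.closure (t '' Iio m) :=
    fun l hl => Subgroup.subset_closure (mem_image_of_mem t hl)
  rcases (by omega : i + 1 < j ∨ i + 1 = j ∨ i = j ∨ j < i) with hij | rfl | rfl | hij
  · have hc : Commute (t i) (descWord t j k) :=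
      commute_descWord fun l hjl hlk => ht.commute i l (by omega) (by omega)
    refine ⟨h * t i, mul_mem hh (gen i (by omega)), j, k, hjk, ?_⟩
    rw [mul_assoc, ← hc.eq, mul_assoc]
  · exact ⟨h, hh, i, k + 1, by omega, by rw [descWord_succ_eq_mul, mul_assoc]⟩
  · obtain ⟨k, rfl⟩ : ∃ k', k = k' + 1 := ⟨k - 1, by omega⟩
    refine ⟨h, hh, i + 1, k, by omega, ?_⟩
    rw [descWord_succ_eq_mul, mul_assoc, mul_assoc, ht.mul_self i (by omega), mul_one]
  · obtain ⟨i, rfl⟩ : ∃ i', i = i' + 1 := ⟨i - 1, by omega⟩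
    refine ⟨h * t i, mul_mem hh (gen i (by omega)), j, k, hjk, ?_⟩
    rw [mul_assoc, ht.descWord_mul (by omega) (by omega) (by omega), mul_assoc]

lemma IsTypeAFamily.closure_subset_descCosets (ht : IsTypeAFamily t n) {m : ℕ} (hm : m < n) :
    (Subgroup.closure (t '' Iio (m + 1)) : Set G) ⊆ descCosets t m := by
  intro x hx
  induction hx using Subgroup.closure_induction_right with
  | one => exact ⟨1, one_mem _, m + 1, 0, rfl, by simp [descWord]⟩
  | mul_right x _ y hy ih =>
    obtain ⟨i, hi, rfl⟩ := hy
    exact ht.mul_mem_descCosets hm ih (Nat.lt_succ_iff.mp hi)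
  | mul_inv_cancel x _ y hy ih =>
    obtain ⟨i, hi, rfl⟩ := hy
    rw [inv_eq_of_mul_eq_one_right (ht.mul_self i (by simp at hi; omega))]
    exact ht.mul_mem_descCosets hm ih (Nat.lt_succ_iff.mp hi)

section Faithful

variable {α : Type*} [DecidableEq α] {f : G →* Perm α} {e : ℕ → α}

lemma map_descWord_apply (hf : ∀ i < n, f (t i) = swap (e i) (e (i + 1))) {j k : ℕ}
    (hjk : j + k ≤ n) : f (descWord t j k) (e j) = e (j + k) := by
  induction k with
  | zero => simp [descWord]
  | succ k ih =>
    rw [descWord, map_mul, Perm.mul_apply, ih (by omega), hf _ (by omega), swap_apply_left]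
    rfl

lemma map_apply_eq_of_mem_closure (he : InjOn e (Iic n))
    (hf : ∀ i < n, f (t i) = swap (e i) (e (i + 1))) {m : ℕ} (hm : m < n) {h : G}
    (hh : h ∈ Subgroup.closure (t '' Iio m)) : f h (e (m + 1)) = e (m + 1) := by
  suffices
      Subgroup.closure (t '' Iio m) ≤ (MulAction.stabilizer (Perm α) (e (m + 1))).comap f from
    this hh
  rw [Subgroup.closure_le]
  rintro _ ⟨i, hi, rfl⟩
  have hne : ∀ l ≤ m, e l ≠ e (m + 1) := fun l hl h =>
    absurd (he (by simp; omega) (by simp; omega) h) (by omega)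
  simp only [mem_Iio] at hi
  simp only [SetLike.mem_coe, Subgroup.mem_comap, MulAction.mem_stabilizer_iff, Perm.smul_def,
    hf i (by omega)]
  exact swap_apply_of_ne_of_ne (hne i (by omega)).symm (hne (i + 1) hi).symm

theorem IsTypeAFamily.injOn_closure (ht : IsTypeAFamily t n) (he : InjOn e (Iic n))
    (hf : ∀ i < n, f (t i) = swap (e i) (e (i + 1))) :
    InjOn f (Subgroup.closure (t '' Iio n)) := by
  suffices ∀ m ≤ n, InjOn f (Subgroup.closure (t '' Iio m)) from this n le_rfl
  intro m
  induction m with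
  | zero =>
    intro _ x hx y hy _
    simp only [Iio_zero_eq_empty, image_empty, Subgroup.closure_empty, SetLike.mem_coe,
      Subgroup.mem_bot] at hx hy
    rw [hx, hy]
  | succ m ih =>
    intro hmn x hx y hy hxy
    obtain ⟨g, hg, j, k, hjk, rfl⟩ := ht.closure_subset_descCosets hmn hx
    obtain ⟨g', hg', j', k', hjk', rfl⟩ := ht.closure_subset_descCosets hmn hy
    have happly : ∀ {g j k}, g ∈ Subgroup.closure (t '' Iio m) → j + k = m + 1 →
        f (g * descWord t j k) (e j) = e (m + 1) := fun hg hjk => by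
      rw [map_mul, Perm.mul_apply, map_descWord_apply hf (by omega), hjk,
        map_apply_eq_of_mem_closure he hf hmn hg]
    obtain rfl : j = j' := by
      refine he (by simp; omega) (by simp; omega) ((f (g * descWord t j k)).injective ?_)
      rw [happly hg hjk, hxy, happly hg' hjk']
    obtain rfl : k = k' := by omega
    rw [map_mul, map_mul, mul_left_inj] at hxy
    rw [ih (by omega) hg hg' hxy]

end Faithful

end TypeA

lemma swap_mul_swap_pow_three {α : Type*} [DecidableEq α] {a b c : α} (hab : a ≠ b)
    (hbc : b ≠ c) : (swap a b * swap b c) ^ 3 = 1 := by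
  ext x
  simp only [pow_succ, pow_zero, one_mul, Perm.mul_apply, swap_apply_def, Perm.one_apply]
  grind

lemma commute_swap_swap {α : Type*} [DecidableEq α] {a b c d : α} (hac : a ≠ c) (had : a ≠ d)
    (hbc : b ≠ c) (hbd : b ≠ d) : Commute (swap a b) (swap c d) := by
  ext x
  simp only [Perm.mul_apply, swap_apply_def]
  grind

lemma prod_map_swap_eq_formPerm {α : Type*} [DecidableEq α] (f : ℕ → α) (m : ℕ) :
    ((List.range m).map fun k => swap (f k) (f (k + 1))).prod =
      List.formPerm ((List.range (m + 1)).map f) := by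
  induction m with
  | zero => simp
  | succ m ih =>
    rw [List.range_succ, List.map_append, List.prod_append, ih]
    simp [List.range_succ, List.formPerm_append_pair]

section AffineA

variable {n : ℕ}

lemma injOn_natCast_zmod : InjOn (Nat.cast : ℕ → ZMod (n + 1)) (Iic n) := fun a ha b hb h => by
  have := congrArg ZMod.val h
  rwa [ZMod.val_cast_of_lt (Nat.lt_succ_of_le ha), ZMod.val_cast_of_lt (Nat.lt_succ_of_le hb)]
    at this

lemma formPerm_map_range_add (c : ZMod (n + 1)) :
    List.formPerm ((List.range (n + 1)).map fun k : ℕ => c + k) = Equiv.addRight 1 := by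
  ext x
  have hnd : ((List.range (n + 1)).map fun k : ℕ => c + k).Nodup :=
    List.nodup_range.map_on fun a ha b hb h => injOn_natCast_zmod
      (by simp at ha ⊢; omega) (by simp at hb ⊢; omega) (add_left_cancel h)
  have := List.formPerm_apply_getElem _ hnd (x - c).val (by simpa using ZMod.val_lt (x - c))
  simp only [List.getElem_map, List.getElem_range, List.length_map, List.length_range,
    ZMod.natCast_mod, ZMod.natCast_zmod_val, Nat.cast_add, Nat.cast_one] at this
  rw [add_sub_cancel] at this
  rw [this, coe_addRight]
  ring

lemma affineA_apply (i j : ZMod (n + 1)) :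
    affineA n i j = if i = j then 1 else if i = j + 1 ∨ j = i + 1 then 3 else 2 := rfl

lemma aa_mul_self (i : ZMod (n + 1)) : aa n i * aa n i = 1 :=
  (affineA n).toCoxeterSystem.simple_mul_simple_self i

lemma aa_braid {i j : ZMod (n + 1)} (h : affineA n i j = 3) :
    aa n i * aa n j * aa n i = aa n j * aa n i * aa n j := by
  have := (affineA n).toCoxeterSystem.wordProd_braidWord_eq j i
  rw [CoxeterSystem.braidWord, CoxeterSystem.braidWord, (affineA n).symmetric j i, h] at this
  simpa [aa, CoxeterSystem.wordProd, CoxeterSystem.alternatingWord, mul_assoc] using this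

lemma aa_commute {i j : ZMod (n + 1)} (h : affineA n i j = 2) : Commute (aa n i) (aa n j) := by
  have := (affineA n).toCoxeterSystem.wordProd_braidWord_eq j i
  rw [CoxeterSystem.braidWord, CoxeterSystem.braidWord, (affineA n).symmetric j i, h] at this
  simp only [CoxeterSystem.wordProd, CoxeterSystem.alternatingWord] at this
  exact this.symm

def aaSucc (n k : ℕ) : (affineA n).Group := aa n (k + 1)

lemma isTypeAFamily_aaSucc : IsTypeAFamily (aaSucc n) n := by
  have hne : ∀ a b : ℕ, a ≤ n → b ≤ n → a ≠ b → (a : ZMod (n + 1)) + 1 ≠ b + 1 :=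
    fun a b ha hb hab h => hab (injOn_natCast_zmod ha hb (add_right_cancel h))
  refine ⟨fun i _ => aa_mul_self _, fun i hi => aa_braid ?_, fun i j hij hj => aa_commute ?_⟩
  · rw [affineA_apply, if_neg (hne i (i + 1) (by omega) (by omega) (by omega)),
      if_pos (Or.inr (by push_cast; ring))]
  · rw [affineA_apply, if_neg (hne i j (by omega) (by omega) (by omega)), if_neg]
    rintro (h | h)
    · exact hne i (j + 1) (by omega) (by omega) (by omega) (by push_cast; exact h)
    · exact hne j (i + 1) (by omega) (by omega) (by omega) (by push_cast; exact h)

lemma parab_eq_closure_aaSucc : parab n = Subgroup.closure (aaSucc n '' Iio n) := by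
  rw [parab]
  congr 1
  ext x
  constructor
  · rintro ⟨i, hi, rfl⟩
    have hval : i.val ≠ 0 := by rwa [ne_eq, ZMod.val_eq_zero]
    refine ⟨i.val - 1, by have := ZMod.val_lt i; simp; omega, ?_⟩
    rw [aaSucc, ← Nat.cast_add_one, Nat.sub_add_cancel (Nat.one_le_iff_ne_zero.mpr hval),
      ZMod.natCast_zmod_val]
  · rintro ⟨k, hk, rfl⟩
    refine ⟨k + 1, fun h => ?_, rfl⟩
    rw [← Nat.cast_add_one, ← Nat.cast_zero] at h
    exact Nat.succ_ne_zero k (injOn_natCast_zmod (by simp at hk ⊢; omega) (by simp) h)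

lemma isLiftable_swap_sub_one : (affineA n).IsLiftable fun i => swap (i - 1) i := by
  intro i j
  dsimp only
  rw [affineA_apply]
  split_ifs with hij hadj
  · rw [hij, pow_one, swap_mul_self]
  · rcases hadj with rfl | rfl
    · rw [add_sub_cancel_right, swap_comm j, swap_comm (j - 1)]
      exact swap_mul_swap_pow_three hij fun h => hij (by linear_combination h)
    · rw [add_sub_cancel_right]
      exact swap_mul_swap_pow_three (fun h => hij (by linear_combination h)) hij
  · push Not at hadj
    have hc : Commute (swap (i - 1) i) (swap (j - 1) j) :=
      commute_swap_swap (fun h => hij (by linear_combination h))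
        (fun h => hadj.1 (by linear_combination h)) (fun h => hadj.2 (by linear_combination -h)) hij
    rw [hc.mul_pow, sq, sq, swap_mul_self, swap_mul_self, one_mul]

noncomputable def toPerm (n : ℕ) : (affineA n).Group →* Perm (ZMod (n + 1)) :=
  (affineA n).toCoxeterSystem.lift ⟨fun i => swap (i - 1) i, isLiftable_swap_sub_one⟩

lemma toPerm_aa (i : ZMod (n + 1)) : toPerm n (aa n i) = swap (i - 1) i :=
  (affineA n).toCoxeterSystem.lift_apply_simple isLiftable_swap_sub_one i

lemma toPerm_pp (j : ZMod (n + 1)) : toPerm n (pp n j) = Equiv.addRight 1 := by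
  have : (toPerm n ∘ fun k : ℕ => aa n (j + 1 + k)) =
      fun k : ℕ => swap (j + (k : ZMod (n + 1))) (j + ((k + 1 : ℕ) : ZMod (n + 1))) := by
    ext k : 1
    rw [Function.comp_apply, toPerm_aa]
    congr 1 <;> push_cast <;> ring
  rw [pp, map_list_prod, List.map_map, this,
    prod_map_swap_eq_formPerm (fun k => j + (k : ZMod (n + 1))), formPerm_map_range_add]

lemma NN_le_ker_toPerm : NN n ≤ (toPerm n).ker := by
  rw [NN, Subgroup.closure_le]
  rintro _ ⟨i, j, rfl⟩
  rw [SetLike.mem_coe, MonoidHom.mem_ker, map_mul, map_inv, toPerm_pp, toPerm_pp, inv_mul_cancel]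

lemma injOn_toPerm_parab : InjOn (toPerm n) (parab n) := by
  rw [parab_eq_closure_aaSucc]
  refine isTypeAFamily_aaSucc.injOn_closure injOn_natCast_zmod fun k _ => ?_
  rw [aaSucc, toPerm_aa, add_sub_cancel_right, Nat.cast_succ]

end AffineA

theorem stmt15_general (n : ℕ) :
    parab n ⊓ NN n = ⊥ := by
  rw [eq_bot_iff]
  rintro x ⟨hxP, hxN⟩
  rw [Subgroup.mem_bot]
  refine injOn_toPerm_parab hxP (one_mem _) ?_
  rw [NN_le_ker_toPerm hxN, map_one]

/-- In `Ãₙ`, the parabolic subgroup `⟨a₁,…,aₙ⟩` intersects `N = ⟨pⱼ⁻¹pᵢ⟩` trivially. -/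
theorem stmt15 (n : ℕ) (hn : 2 ≤ n) :
    parab n ⊓ NN n = ⊥ :=
  stmt15_general n
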